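/- arXiv:2002.07152 — 4 statements merged into one kernel-verified Lean document; each statement's English description precedes it below -/
import Mathlib

section
/- Let w_1, ..., w_ℓ be a sequence of positive reals with ℓ ≥ 1. Call index i ∈ {2,...,ℓ} 'pre-light' if w_i ≤ w_{i-1}, and also declare index 1 pre-light. Call index i ∈ {1,...,ℓ-1} 'post-light' if w_i ≤ w_{i+1}, and also declare index ℓ post-light. Then either strictly more than ℓ/2 indices are pre-light, or strictly more than ℓ/2 indices are post-light. -/
/-- Lemma 3 of "Weighted Additive Spanners": among indices 1,…,ℓ, either more than
ℓ/2 are pre-light (index 1, or `w i ≤ w (i-1)`) or more than ℓ/2 are post-light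
(index ℓ, or `w i ≤ w (i+1)`). -/
theorem stmt_1 (ℓ : ℕ) (hℓ : 1 ≤ ℓ) (w : ℕ → ℝ) (hw : ∀ i, 0 < w i) :
    (ℓ : ℝ) / 2 <
      (((Finset.Icc 1 ℓ).filter (fun i => i = 1 ∨ w i ≤ w (i - 1))).card : ℝ) ∨
    (ℓ : ℝ) / 2 <
      (((Finset.Icc 1 ℓ).filter (fun i => i = ℓ ∨ w i ≤ w (i + 1))).card : ℝ) := by
  set A := (Finset.Icc 1 ℓ).filter (fun i => i = 1 ∨ w i ≤ w (i - 1)) with hA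
  set B := (Finset.Icc 1 ℓ).filter (fun i => i = ℓ ∨ w i ≤ w (i + 1)) with hB
  have key : ℓ + 1 ≤ A.card + B.card := by
    have hBsub : B ⊆ Finset.Icc 1 ℓ := Finset.filter_subset _ _
    have h1A : (1 : ℕ) ∈ A := by
      simp [hA, Finset.mem_filter, Finset.mem_Icc, hℓ]
    -- injection from complement of B into A \ {1}
    have hinj : (Finset.Icc 1 ℓ \ B).card ≤ (A.erase 1).card := by
      apply Finset.card_le_card_of_injOn (fun i => i + 1)
      · intro i hi
        simp only [Finset.mem_coe, Finset.mem_sdiff, hB, Finset.mem_filter, Finset.mem_Icc] at hi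
        obtain ⟨⟨h1, h2⟩, h3⟩ := hi
        push_neg at h3
        obtain ⟨hne, hlt⟩ := h3 ⟨h1, h2⟩
        have : i < ℓ := lt_of_le_of_ne h2 hne
        simp only [Finset.mem_coe, Finset.mem_erase, hA, Finset.mem_filter, Finset.mem_Icc]
        refine ⟨by omega, ⟨by omega, by omega⟩, Or.inr ?_⟩
        have : i + 1 - 1 = i := by omega
        rw [this]
        linarith
      · intro a _ b _ h; simpa using h
    have hcs : (Finset.Icc 1 ℓ \ B).card = ℓ - B.card := by
      rw [Finset.card_sdiff_of_subset hBsub, Nat.card_Icc]; omega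
    have hB_le : B.card ≤ ℓ := by
      have := Finset.card_le_card hBsub
      simpa [Nat.card_Icc] using this
    have hAe : (A.erase 1).card = A.card - 1 := Finset.card_erase_of_mem h1A
    have hA_ge : 1 ≤ A.card := Finset.card_pos.mpr ⟨1, h1A⟩
    omega
  by_contra h
  push_neg at h
  obtain ⟨h1, h2⟩ := h
  have : (↑(A.card + B.card) : ℝ) ≤ ℓ := by
    push_cast
    linarith
  have : (↑(ℓ + 1) : ℝ) ≤ ℓ := le_trans (by exact_mod_cast key) this
  push_cast at this
  linarith
end

section
/- Let w_1, ..., w_ℓ be positive reals, with index 1 declared pre-light and index i ≥ 2 pre-light if w_i ≤ w_{i-1}. Suppose a binary relation R between an abstract set X and indices {1,...,ℓ} satisfies: whenever x R i and x R k with i < k, we have w_k ≥ w_{i+1} + ... + w_{k-1}. Then for every x ∈ X, the set of pre-light indices i with x R i has cardinality at most 3. -/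
open scoped Classical

/-- Abstract Lemma 4 of "Weighted Additive Spanners": if the relation `R` between
an abstract set `X` and indices `{1,…,ℓ}` satisfies the weight inequality
`w (i+1) + ⋯ + w (k-1) ≤ w k` whenever `x R i` and `x R k` with `i < k`, and all
weights are positive, then each `x` is related to at most 3 pre-light indices. -/
theorem stmt_2 {X : Type*} (ℓ : ℕ) (w : ℕ → ℝ) (hw : ∀ i, 0 < w i)
    (R : X → ℕ → Prop)
    (hR : ∀ x, ∀ i ∈ Finset.Icc 1 ℓ, ∀ k ∈ Finset.Icc 1 ℓ, i < k →
      R x i → R x k → ∑ j ∈ Finset.Ioo i k, w j ≤ w k) :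
    ∀ x : X,
      ((Finset.Icc 1 ℓ).filter (fun i => (i = 1 ∨ w i ≤ w (i - 1)) ∧ R x i)).card ≤ 3 := by
  intro x
  by_contra h
  push_neg at h
  set S := (Finset.Icc 1 ℓ).filter (fun i => (i = 1 ∨ w i ≤ w (i - 1)) ∧ R x i) with hS
  have hcard : 4 ≤ S.card := h
  have hne : S.Nonempty := Finset.card_pos.mp (by omega)
  set i := S.min' hne with hi
  set k := S.max' hne with hk
  have hiS : i ∈ S := S.min'_mem hne
  have hkS : k ∈ S := S.max'_mem hne
  have hsub : S ⊆ Finset.Icc i k := by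
    intro j hj
    exact Finset.mem_Icc.mpr ⟨S.min'_le j hj, S.le_max' j hj⟩
  have hgap : i + 3 ≤ k := by
    have := Finset.card_le_card hsub
    rw [Nat.card_Icc] at this
    omega
  have hiIcc : i ∈ Finset.Icc 1 ℓ := (Finset.mem_filter.mp hiS).1
  have hkIcc : k ∈ Finset.Icc 1 ℓ := (Finset.mem_filter.mp hkS).1
  have hi1 : 1 ≤ i := (Finset.mem_Icc.mp hiIcc).1
  have hRi : R x i := (Finset.mem_filter.mp hiS).2.2
  have hRk : R x k := (Finset.mem_filter.mp hkS).2.2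
  have hkpre : w k ≤ w (k - 1) := by
    rcases (Finset.mem_filter.mp hkS).2.1 with h1 | h2
    · omega
    · exact h2
  have hsum : ∑ j ∈ Finset.Ioo i k, w j ≤ w k := hR x i hiIcc k hkIcc (by omega) hRi hRk
  have hpair : ({i + 1, k - 1} : Finset ℕ) ⊆ Finset.Ioo i k := by
    intro j hj
    simp only [Finset.mem_insert, Finset.mem_singleton] at hj
    rcases hj with rfl | rfl <;> (rw [Finset.mem_Ioo]; omega)
  have hpairsum : w (i + 1) + w (k - 1) ≤ ∑ j ∈ Finset.Ioo i k, w j := by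
    have : ∑ j ∈ ({i + 1, k - 1} : Finset ℕ), w j ≤ ∑ j ∈ Finset.Ioo i k, w j :=
      Finset.sum_le_sum_of_subset_of_nonneg hpair (fun j _ _ => (hw j).le)
    rwa [Finset.sum_insert (by simp; omega), Finset.sum_singleton] at this
  have := hw (i + 1)
  linarith
end

section
/- Let G be a finite simple graph with positive edge weights, and let π be a shortest path from s to t. Let M = {e_1, ..., e_ℓ} be a subset of the edges of π, listed in order along π with weights w_1, ..., w_ℓ, where e_j = (u_j, v_j) with u_j closer to s. Suppose x is a vertex with edges to u_i and u_k (i < k) satisfying w(u_i, x) ≤ w_i and w(x, u_k) ≤ w_k. Then w_k ≥ Σ_{j=i+1}^{k-1} w_j. -/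
open Finset

/-- The weight of a walk: the sum of `w u v` over the darts `(u, v)` of the walk. -/
def walkWeight {V : Type*} {G : SimpleGraph V} (w : V → V → ℝ) {s t : V}
    (p : G.Walk s t) : ℝ :=
  (p.darts.map (fun d => w d.toProd.1 d.toProd.2)).sum

namespace SimpleGraph.Walk

variable {V : Type*} {G : SimpleGraph V} {w : V → V → ℝ}

/-- The walk consisting of the first `n` darts of `p`. -/
def takeW {u v : V} (p : G.Walk u v) (n : ℕ) : G.Walk u (p.getVert n) :=
  match p, n with
  | .nil, _ => .nil
  | .cons _ _, 0 => .nil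
  | .cons h q, (n + 1) => .cons h (q.takeW n)

@[simp] lemma walkWeight_nil {u : V} : walkWeight w (.nil : G.Walk u u) = 0 := rfl

@[simp] lemma walkWeight_cons {u v t : V} (h : G.Adj u v) (q : G.Walk v t) :
    walkWeight w (.cons h q) = w u v + walkWeight w q := by
  simp [walkWeight]

@[simp] lemma walkWeight_copy {u v u' v' : V} (p : G.Walk u v) (hu : u = u') (hv : v = v') :
    walkWeight w (p.copy hu hv) = walkWeight w p := by
  subst hu; subst hv; rfl

lemma walkWeight_append {u v t : V} (p : G.Walk u v) (q : G.Walk v t) :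
    walkWeight w (p.append q) = walkWeight w p + walkWeight w q := by
  simp [walkWeight, darts_append]

lemma walkWeight_eq_sum {u v : V} (p : G.Walk u v) :
    walkWeight w p = ∑ m ∈ range p.length, w (p.getVert m) (p.getVert (m + 1)) := by
  induction p with
  | nil => simp
  | cons h q ih =>
    rw [walkWeight_cons, ih, length_cons, Finset.sum_range_succ']
    simp only [getVert_cons_succ, getVert_zero]
    ring

lemma walkWeight_takeW {u v : V} (p : G.Walk u v) (n : ℕ) (hn : n ≤ p.length) :
    walkWeight w (p.takeW n) = ∑ m ∈ range n, w (p.getVert m) (p.getVert (m + 1)) := by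
  induction p generalizing n with
  | nil =>
    obtain rfl : n = 0 := by simpa using hn
    simp [takeW]
  | cons h q ih =>
    cases n with
    | zero => simp [takeW]; rfl
    | succ n =>
      rw [show walkWeight w ((Walk.cons h q).takeW (n+1)) = w _ _ + walkWeight w (q.takeW n) from walkWeight_cons h (q.takeW n),
        ih n (by simpa using hn), Finset.sum_range_succ']
      simp only [getVert_cons_succ, getVert_zero]
      ring

lemma walkWeight_drop {u v : V} (p : G.Walk u v) (n : ℕ) :
    walkWeight w (p.drop n) = ∑ m ∈ Ico n p.length, w (p.getVert m) (p.getVert (m + 1)) := by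
  induction p generalizing n with
  | nil => simp [drop]
  | cons h q ih =>
    cases n with
    | zero =>
      rw [show (Walk.cons h q).drop 0 = (Walk.cons h q).copy (getVert_zero _).symm rfl from rfl,
        walkWeight_copy, walkWeight_eq_sum, Finset.range_eq_Ico]
    | succ n =>
      rw [show (Walk.cons h q).drop (n+1) = (q.drop n).copy (getVert_cons_succ _ h).symm rfl
        from rfl, walkWeight_copy, ih, length_cons,
        ← Finset.map_add_right_Ico n q.length 1, Finset.sum_map]
      simp [getVert_cons_succ, addRightEmbedding]

end SimpleGraph.Walk

/-- Lemma 2 of "Weighted Additive Spanners".  Let `π` be a shortest `s`–`t` path,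
let `M = {e_1, …, e_ℓ}` be a subset of its edges listed in order (`e j` is the
edge from `u j := π.getVert (e j)` to `π.getVert (e j + 1)`, with weight `w_j`).
If `x` has edges to `u i` and `u k` (`i < k`) of weight at most `w_i`, `w_k`
respectively, then `w_k ≥ Σ_{j=i+1}^{k-1} w_j`. -/
theorem stmt_5 {V : Type*} [Fintype V] (G : SimpleGraph V) (w : V → V → ℝ)
    (hpos : ∀ a b, G.Adj a b → 0 < w a b)
    {s t : V} (p : G.Walk s t) (hpath : p.IsPath)
    (hshort : ∀ q : G.Walk s t, walkWeight w p ≤ walkWeight w q)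
    (ℓ : ℕ) (e : Fin ℓ → ℕ) (hmono : StrictMono e) (hrange : ∀ j, e j < p.length)
    (wM : Fin ℓ → ℝ) (hwM : ∀ j, wM j = w (p.getVert (e j)) (p.getVert (e j + 1)))
    (x : V) (i k : Fin ℓ) (hik : i < k)
    (hxi : G.Adj (p.getVert (e i)) x) (hxk : G.Adj x (p.getVert (e k)))
    (hlight_i : w (p.getVert (e i)) x ≤ wM i)
    (hlight_k : w x (p.getVert (e k)) ≤ wM k) :
    ∑ j ∈ Finset.Ioo i k, wM j ≤ wM k := by
  have hab : e i < e k := hmono hik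
  have hb : e k < p.length := hrange k
  have ha : e i ≤ p.length := le_of_lt (lt_trans hab hb)
  set f : ℕ → ℝ := fun m => w (p.getVert m) (p.getVert (m + 1)) with hf
  -- the alternative walk through x
  set q : G.Walk s t :=
    (p.takeW (e i)).append (SimpleGraph.Walk.cons hxi (SimpleGraph.Walk.cons hxk (p.drop (e k))))
    with hq
  have h1 := hshort q
  rw [hq, SimpleGraph.Walk.walkWeight_append, SimpleGraph.Walk.walkWeight_cons,
    SimpleGraph.Walk.walkWeight_cons, SimpleGraph.Walk.walkWeight_takeW p _ ha,
    SimpleGraph.Walk.walkWeight_drop, SimpleGraph.Walk.walkWeight_eq_sum] at h1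
  have hsplit : ∑ m ∈ Finset.range p.length, f m
      = (∑ m ∈ Finset.range (e i), f m) + (∑ m ∈ Finset.Ico (e i) (e k), f m)
        + (∑ m ∈ Finset.Ico (e k) p.length, f m) := by
    rw [Finset.range_eq_Ico, ← Finset.sum_Ico_consecutive f (Nat.zero_le (e k)) (le_of_lt hb),
      ← Finset.sum_Ico_consecutive f (Nat.zero_le (e i)) (le_of_lt hab), Finset.range_eq_Ico]
  have hmid : ∑ m ∈ Finset.Ico (e i) (e k), f m ≤ wM i + wM k := by
    rw [hsplit] at h1
    have := hlight_i
    have := hlight_k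
    simp only [hf] at h1 ⊢
    linarith
  -- lower bound on the middle sum
  have himg : (Finset.Ico i k).image e ⊆ Finset.Ico (e i) (e k) := by
    intro m hm
    simp only [Finset.mem_image, Finset.mem_Ico] at hm ⊢
    obtain ⟨j, ⟨hj1, hj2⟩, rfl⟩ := hm
    exact ⟨hmono.monotone hj1, hmono hj2⟩
  have h2 : ∑ j ∈ Finset.Ico i k, wM j
      = ∑ m ∈ (Finset.Ico i k).image e, f m := by
    rw [Finset.sum_image (fun a _ b _ hab => hmono.injective hab)]
    exact Finset.sum_congr rfl (fun j _ => hwM j)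
  have h3 : ∑ m ∈ (Finset.Ico i k).image e, f m ≤ ∑ m ∈ Finset.Ico (e i) (e k), f m := by
    apply Finset.sum_le_sum_of_subset_of_nonneg himg
    intro m hm _
    rw [Finset.mem_Ico] at hm
    exact le_of_lt (hpos _ _ (p.adj_getVert_succ (lt_trans hm.2 hb)))
  have h4 : Finset.Ico i k = insert i (Finset.Ioo i k) := (Finset.Ioo_insert_left hik).symm
  have h5 : ∑ j ∈ Finset.Ico i k, wM j = wM i + ∑ j ∈ Finset.Ioo i k, wM j := by
    rw [h4, Finset.sum_insert (by simp)]
  linarith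
end

section
/- In an unweighted graph G, let H be a subgraph obtained by including, for each vertex, at least d arbitrary incident edges (or all incident edges if its degree is less than d). Let π be a shortest path in G, and suppose ℓ edges of π are absent from H. Then the number of vertices adjacent in H to some vertex of π is at least d·ℓ/6. -/
open scoped Classical

namespace SimpleGraph.Walk
variable {V : Type*} {G : SimpleGraph V}

lemma length_drop' {u v : V} (p : G.Walk u v) (n : ℕ) :
    (p.drop n).length = p.length - n := by
  induction p generalizing n with
  | nil => cases n <;> simp [drop]
  | cons h q ih =>
    cases n with
    | zero => simp [drop]
    | succ n => simp [drop, ih]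

lemma dist_getVert_right {u v : V} (p : G.Walk u v) (n : ℕ) :
    G.dist (p.getVert n) v ≤ p.length - n := by
  simpa [length_drop'] using SimpleGraph.dist_le (p.drop n)

lemma dist_getVert_left {u v : V} (p : G.Walk u v) {n : ℕ} (hn : n ≤ p.length) :
    G.dist u (p.getVert n) ≤ n := by
  have h := dist_getVert_right p.reverse (p.length - n)
  rw [getVert_reverse, length_reverse] at h
  have h2 : p.length - (p.length - n) = n := by omega
  rw [h2] at h
  calc G.dist u (p.getVert n) = G.dist (p.getVert n) u := SimpleGraph.dist_comm
    _ ≤ n := le_trans h (by omega)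


/-- A prefix walk from `u` to `p.getVert n` of length `n`. -/
noncomputable def prefixWalk {u v : V} (p : G.Walk u v) (n : ℕ) (hn : n ≤ p.length) :
    G.Walk u (p.getVert n) :=
  ((p.reverse.drop (p.length - n)).reverse).copy rfl
    (by rw [getVert_reverse]; congr 1; omega)

lemma length_prefixWalk {u v : V} (p : G.Walk u v) (n : ℕ) (hn : n ≤ p.length) :
    (p.prefixWalk n hn).length = n := by
  simp [prefixWalk, length_drop']
  omega

lemma index_gap {u v : V} (p : G.Walk u v) (hshort : p.length = G.dist u v)
    {i j : ℕ} (hij : i ≤ j) (hj : j ≤ p.length)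
    (q : G.Walk (p.getVert i) (p.getVert j)) : j ≤ i + q.length := by
  have hi : i ≤ p.length := le_trans hij hj
  have W : G.Walk u v := (p.prefixWalk i hi).append (q.append (p.drop j))
  have hW : G.dist u v ≤ ((p.prefixWalk i hi).append (q.append (p.drop j))).length :=
    SimpleGraph.dist_le _
  simp [length_append, length_prefixWalk, length_drop'] at hW
  omega


lemma adj_indices_card_le_three {u v : V} (p : G.Walk u v)
    (hshort : p.length = G.dist u v) (x : V) (F : Finset ℕ)
    (hmem : ∀ i ∈ F, i ≤ p.length ∧ G.Adj (p.getVert i) x) : F.card ≤ 3 := by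
  rcases F.eq_empty_or_nonempty with h | h
  · simp [h]
  · obtain ⟨m, hmF, hmin⟩ := F.exists_min_image id h
    have hsub : F ⊆ Finset.Icc m (m + 2) := by
      intro j hjF
      simp only [Finset.mem_Icc]
      refine ⟨hmin j hjF, ?_⟩
      obtain ⟨hm1, hm2⟩ := hmem m hmF
      obtain ⟨hj1, hj2⟩ := hmem j hjF
      have hmj : m ≤ j := hmin j hjF
      have := p.index_gap hshort hmj hj1 ((hm2.toWalk).append (hj2.symm.toWalk))
      simp [length_append] at this
      omega
    calc F.card ≤ (Finset.Icc m (m + 2)).card := Finset.card_le_card hsub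
      _ ≤ 3 := by rw [Nat.card_Icc]; omega

end SimpleGraph.Walk

/-- The unweighted shortest-path neighborhood lemma (Lemma 1 of "Weighted
Additive Spanners", quantitative form).  If `H ≤ G` contains, at each vertex, at
least `min d (deg_G)` incident edges, `π` is a shortest path (hop distance) in
`G`, and `ℓ` of its edges are absent from `H`, then at least `d·ℓ/6` vertices
are adjacent in `H` to some vertex of `π`. -/
theorem stmt_6 {V : Type*} [Fintype V] (G H : SimpleGraph V) (hHG : H ≤ G)
    [DecidableRel G.Adj] [DecidableRel H.Adj]
    (d : ℕ) (hinit : ∀ v : V, min d (G.degree v) ≤ H.degree v)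
    {s t : V} (p : G.Walk s t) (hpath : p.IsPath) (hshort : p.length = G.dist s t)
    (ℓ : ℕ) (hmiss : (p.edges.filter (fun e => e ∉ H.edgeSet)).length = ℓ) :
    (d * ℓ : ℝ) / 6 ≤
      ((Finset.univ.filter (fun x : V => ∃ u ∈ p.support, H.Adj u x)).card : ℝ) := by
  classical
  set N := Finset.univ.filter (fun x : V => ∃ u ∈ p.support, H.Adj u x) with hN
  have hdnd : p.darts.Nodup :=
    SimpleGraph.Walk.darts_nodup_of_support_nodup hpath.support_nodup
  set L := p.darts.filter (fun dt => dt.edge ∉ H.edgeSet) with hL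
  have hLlen : L.length = ℓ := by
    rw [← hmiss]
    have he : p.edges.filter (fun e => e ∉ H.edgeSet) = L.map SimpleGraph.Dart.edge := by
      rw [SimpleGraph.Walk.edges, List.filter_map, hL]
      rfl
    rw [he, List.length_map]
  set S : Finset G.Dart := L.toFinset with hS
  have hScard : S.card = ℓ := by
    rw [hS, hL, List.toFinset_card_of_nodup (hdnd.filter _), ← hL, hLlen]
  have hSmem : ∀ dt ∈ S, dt ∈ p.darts ∧ dt.edge ∉ H.edgeSet := by
    intro dt hdt
    rw [hS, List.mem_toFinset, hL, List.mem_filter] at hdt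
    exact ⟨hdt.1, by simpa using hdt.2⟩
  -- each missing dart's first vertex has H-degree ≥ d
  have hdeg : ∀ dt ∈ S, d ≤ H.degree dt.fst := by
    intro dt hdt
    obtain ⟨hdmem, hnotH⟩ := hSmem dt hdt
    have hGadj : G.Adj dt.fst dt.snd := dt.adj
    have hnadj : ¬ H.Adj dt.fst dt.snd := by
      intro h
      exact hnotH (by rw [SimpleGraph.Dart.edge]; exact h)
    have hlt : H.degree dt.fst < G.degree dt.fst := by
      apply Finset.card_lt_card
      rw [Finset.ssubset_iff_of_subset]
      · exact ⟨dt.snd, by simp [hGadj], by simpa using hnadj⟩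
      · intro y hy
        rw [SimpleGraph.mem_neighborFinset] at hy ⊢
        exact hHG hy
    have := hinit dt.fst
    omega
  have hnbr : ∀ dt ∈ S, H.neighborFinset dt.fst ⊆ N := by
    intro dt hdt y hy
    rw [SimpleGraph.mem_neighborFinset] at hy
    have hsup : dt.fst ∈ p.support :=
      SimpleGraph.Walk.dart_fst_mem_support_of_mem_darts p (hSmem dt hdt).1
    rw [hN, Finset.mem_filter]
    exact ⟨Finset.mem_univ y, dt.fst, hsup, hy⟩
  -- each vertex x is H-adjacent to the first vertex of at most 3 darts of S
  have bound : ∀ x : V, (S.filter (fun dt => H.Adj dt.fst x)).card ≤ 3 := by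
    intro x
    set F := (Finset.range (p.length + 1)).filter (fun i => G.Adj (p.getVert i) x) with hF
    set U := p.support.toFinset.filter (fun u => G.Adj u x) with hU
    have hTU : (S.filter (fun dt => H.Adj dt.fst x)).card ≤ U.card := by
      apply Finset.card_le_card_of_injOn (fun dt => dt.fst)
      · intro dt hdt
        rw [Finset.mem_coe, Finset.mem_filter] at hdt
        rw [Finset.mem_coe, hU, Finset.mem_filter, List.mem_toFinset]
        exact ⟨SimpleGraph.Walk.dart_fst_mem_support_of_mem_darts p (hSmem dt hdt.1).1,
          hHG hdt.2⟩
      · intro d1 h1 d2 h2 hfst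
        simp only [Finset.coe_filter, Set.mem_setOf_eq] at h1 h2
        have hnodup : (p.darts.map (fun dt => dt.fst)).Nodup := by
          rw [SimpleGraph.Walk.map_fst_darts]
          exact hpath.support_nodup.sublist (List.dropLast_sublist _)
        exact List.inj_on_of_nodup_map hnodup (hSmem d1 h1.1).1 (hSmem d2 h2.1).1 hfst
    have hUF : U.card ≤ F.card := by
      apply Finset.card_le_card_of_surjOn p.getVert
      intro u hu
      simp only [Finset.coe_filter, Set.mem_setOf_eq, hU, Finset.mem_coe, Finset.mem_filter,
        List.mem_toFinset] at hu
      obtain ⟨n, hgv, hle⟩ := SimpleGraph.Walk.mem_support_iff_exists_getVert.mp hu.1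
      refine ⟨n, ?_, hgv⟩
      simp only [hF, Finset.coe_filter, Set.mem_setOf_eq, Finset.mem_range]
      exact ⟨by omega, by rw [hgv]; exact hu.2⟩
    have hF3 : F.card ≤ 3 := by
      apply SimpleGraph.Walk.adj_indices_card_le_three p hshort x
      intro i hi
      rw [hF, Finset.mem_filter, Finset.mem_range] at hi
      exact ⟨by omega, hi.2⟩
    omega
  -- double counting
  have key : d * ℓ ≤ 3 * N.card := by
    calc d * ℓ = ∑ _dt ∈ S, d := by rw [Finset.sum_const, hScard, smul_eq_mul, mul_comm]
      _ ≤ ∑ dt ∈ S, (H.neighborFinset dt.fst).card := Finset.sum_le_sum hdeg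
      _ = ∑ dt ∈ S, (N.filter (fun x => H.Adj dt.fst x)).card := by
          refine Finset.sum_congr rfl fun dt hdt => ?_
          congr 1
          ext y
          simp only [Finset.mem_filter, SimpleGraph.mem_neighborFinset]
          exact ⟨fun h => ⟨hnbr dt hdt (by simpa using h), h⟩, fun h => h.2⟩
      _ = ∑ x ∈ N, (S.filter (fun dt => H.Adj dt.fst x)).card := by
          simp_rw [Finset.card_filter]
          rw [Finset.sum_comm]
      _ ≤ ∑ _x ∈ N, 3 := Finset.sum_le_sum fun x _ => bound x
      _ = 3 * N.card := by rw [Finset.sum_const, smul_eq_mul, mul_comm]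
  have keyR : (d * ℓ : ℝ) ≤ 3 * (N.card : ℝ) := by exact_mod_cast key
  linarith
end
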